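/- arXiv:2203.16115 — 4 statements merged into one kernel-verified Lean document; each statement's English description precedes it below -/
import Mathlib

section
/- Let I be a directed set and let ((X_i)_{i∈I}, (φ_{i,j} : X_j → X_i)_{i≤j}) be a projective (inverse) system of topological spaces indexed by I. If every X_i is a nonempty compact T1 topological space and every transition map φ_{i,j} is a closed map, then the projective limit lim←_{i∈I} X_i is nonempty. -/
/-- Sections of a set of dependent pairs. -/
def invLimSecs {I : Type} (X : I → Type) (T : Set ((i : I) × X i)) (i : I) : Set (X i) :=
  {x | Sigma.mk i x ∈ T}

/-- A projective (inverse) limit of nonempty compact T1 topological spaces over a directed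
index set is nonempty, provided the (continuous) transition maps are closed maps. -/
theorem inverseLimit_nonempty_of_compact_t1_closedMaps
    (I : Type) [Preorder I] [IsDirected I (· ≤ ·)]
    (X : I → Type) [∀ i, TopologicalSpace (X i)]
    (φ : ∀ i j, i ≤ j → X j → X i)
    (hφ_id : ∀ i (x : X i), φ i i le_rfl x = x)
    (hφ_comp : ∀ i j l (hij : i ≤ j) (hjl : j ≤ l) (x : X l),
      φ i j hij (φ j l hjl x) = φ i l (hij.trans hjl) x)
    (hne : ∀ i, Nonempty (X i))
    (hcompact : ∀ i, CompactSpace (X i))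
    (ht1 : ∀ i, T1Space (X i))
    (hcont : ∀ i j (h : i ≤ j), Continuous (φ i j h))
    (hclosed : ∀ i j (h : i ≤ j), IsClosedMap (φ i j h)) :
    ∃ x : ∀ i, X i, ∀ i j (h : i ≤ j), φ i j h (x j) = x i := by
  classical
  haveI := hcompact
  haveI := ht1
  -- image under an identity transition map
  have him : ∀ i (s : Set (X i)), φ i i le_rfl '' s = s := by
    intro i s
    ext x
    constructor
    · rintro ⟨y, hy, rfl⟩; rwa [hφ_id]
    · intro hx; exact ⟨x, hx, hφ_id i x⟩
  -- the collection of descending families of nonempty closed subsets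
  set S : Set (Set ((i : I) × X i)) :=
    {T | (∀ i, IsClosed (invLimSecs X T i)) ∧ (∀ i, (invLimSecs X T i).Nonempty) ∧
      (∀ i j (h : i ≤ j), ∀ y ∈ invLimSecs X T j, φ i j h y ∈ invLimSecs X T i)} with hS
  have huniv : Set.univ ∈ S :=
    ⟨fun i => isClosed_univ, fun i => ⟨(hne i).some, trivial⟩, fun _ _ _ _ _ => trivial⟩
  -- Zorn's lemma: a minimal descending family exists
  obtain ⟨M, -, hMmem, hMmin⟩ :
      ∃ M, M ⊆ Set.univ ∧ Minimal (· ∈ S) M := by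
    apply zorn_superset_nonempty S ?_ Set.univ huniv
    intro c hcS hchain hcne
    refine ⟨⋂₀ c, ?_, fun s hs => Set.sInter_subset_of_mem hs⟩
    have hsec : ∀ i, invLimSecs X (⋂₀ c) i = ⋂ (T : c), invLimSecs X T.1 i := by
      intro i; ext x
      simp [invLimSecs, Set.mem_sInter, Set.mem_iInter, Subtype.forall]
    haveI : Nonempty c := hcne.to_subtype
    refine ⟨?_, ?_, ?_⟩
    · intro i; rw [hsec]
      exact isClosed_iInter fun T => (hcS T.2).1 i
    · intro i; rw [hsec]
      apply IsCompact.nonempty_iInter_of_directed_nonempty_isCompact_isClosed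
      · intro T U
        rcases hchain.total T.2 U.2 with h | h
        · exact ⟨T, le_refl _, fun x hx => h hx⟩
        · exact ⟨U, fun x hx => h hx, le_refl _⟩
      · exact fun T => (hcS T.2).2.1 i
      · exact fun T => ((hcS T.2).1 i).isCompact
      · exact fun T => (hcS T.2).1 i
    · intro i j h y hy
      rw [hsec] at hy ⊢
      rw [Set.mem_iInter] at hy ⊢
      exact fun T => (hcS T.2).2.2 i j h y (hy T)
  set A : ∀ i, Set (X i) := invLimSecs X M with hA
  obtain ⟨hMc, hMn, hMd⟩ := hMmem
  -- the minimality principle, stated for families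
  have hmin : ∀ B : ∀ i, Set (X i), (∀ i, IsClosed (B i)) → (∀ i, (B i).Nonempty) →
      (∀ i j (h : i ≤ j), ∀ y ∈ B j, φ i j h y ∈ B i) → (∀ i, B i ⊆ A i) →
      ∀ i, B i = A i := by
    intro B h1 h2 h3 h4
    have hBS : {p : (i : I) × X i | p.2 ∈ B p.1} ∈ S := ⟨h1, h2, h3⟩
    have hsub : {p : (i : I) × X i | p.2 ∈ B p.1} ⊆ M := by
      rintro ⟨i, x⟩ hp
      exact h4 i hp
    have hMsub := hMmin hBS hsub
    intro i
    ext x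
    exact ⟨fun hx => hsub hx, fun hx => hMsub hx⟩
  -- Step 1: transition maps are surjective between members of the minimal family
  have hsurj : ∀ i j (h : i ≤ j), φ i j h '' A j = A i := by
    intro i j h
    set B : ∀ i, Set (X i) :=
      fun i => ⋂ (k : {k // i ≤ k}), φ i k.1 k.2 '' A k.1 with hB
    have hBdir : ∀ i, Directed (· ⊇ ·) fun k : {k // i ≤ k} => φ i k.1 k.2 '' A k.1 := by
      intro i k l
      obtain ⟨m, hkm, hlm⟩ := directed_of (· ≤ ·) k.1 l.1
      refine ⟨⟨m, k.2.trans hkm⟩, ?_, ?_⟩ <;>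
      · rintro _ ⟨z, hz, rfl⟩
        first
        | exact ⟨φ k.1 m hkm z, hMd k.1 m hkm z hz, hφ_comp i k.1 m k.2 hkm z⟩
        | exact ⟨φ l.1 m hlm z, hMd l.1 m hlm z hz, hφ_comp i l.1 m l.2 hlm z⟩
    have hBA : ∀ i, B i ⊆ A i := by
      intro i
      have := Set.iInter_subset (fun k : {k // i ≤ k} => φ i k.1 k.2 '' A k.1) ⟨i, le_rfl⟩
      rwa [him i (A i)] at this
    have hBeq := hmin B
      (fun i => isClosed_iInter fun k => hclosed i k.1 k.2 _ (hMc k.1))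
      (fun i => by
        haveI : Nonempty {k // i ≤ k} := ⟨⟨i, le_rfl⟩⟩
        exact IsCompact.nonempty_iInter_of_directed_nonempty_isCompact_isClosed _
          (hBdir i) (fun k => (hMn k.1).image _)
          (fun k => (hclosed i k.1 k.2 _ (hMc k.1)).isCompact)
          (fun k => hclosed i k.1 k.2 _ (hMc k.1)))
      (fun i j hij y hy => by
        rw [Set.mem_iInter] at hy ⊢
        intro k
        obtain ⟨m, hjm, hkm⟩ := directed_of (· ≤ ·) j k.1
        obtain ⟨z, hz, rfl⟩ := hy ⟨m, hjm⟩
        refine ⟨φ k.1 m hkm z, hMd k.1 m hkm z hz, ?_⟩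
        rw [hφ_comp i k.1 m k.2 hkm z, hφ_comp i j m hij hjm z])
      hBA
    apply Set.Subset.antisymm
    · rintro _ ⟨z, hz, rfl⟩; exact hMd i j h z hz
    · rw [← hBeq i]
      exact Set.iInter_subset (fun k : {k // i ≤ k} => φ i k.1 k.2 '' A k.1) ⟨j, h⟩
  -- Step 2: each member of the minimal family is a singleton
  have hsing : ∀ i₀ (x : X i₀), x ∈ A i₀ → A i₀ = {x} := by
    intro i₀ x hx
    set D : ∀ j, i₀ ≤ j → Set (X j) :=
      fun j hj => A j ∩ φ i₀ j hj ⁻¹' {x} with hD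
    have hDcl : ∀ j (hj : i₀ ≤ j), IsClosed (D j hj) := fun j hj =>
      (hMc j).inter (isClosed_singleton.preimage (hcont i₀ j hj))
    have hDne : ∀ j (hj : i₀ ≤ j), (D j hj).Nonempty := by
      intro j hj
      have : x ∈ φ i₀ j hj '' A j := by rw [hsurj i₀ j hj]; exact hx
      obtain ⟨y, hy, hxy⟩ := this
      exact ⟨y, hy, hxy⟩
    have hDdesc : ∀ j k (hj : i₀ ≤ j) (hk : i₀ ≤ k) (hjk : j ≤ k),
        ∀ z ∈ D k hk, φ j k hjk z ∈ D j hj := by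
      intro j k hj hk hjk z hz
      refine ⟨hMd j k hjk z hz.1, ?_⟩
      have : φ i₀ j hj (φ j k hjk z) = φ i₀ k hk z := hφ_comp i₀ j k hj hjk z
      simp only [Set.mem_preimage, Set.mem_singleton_iff, this]
      exact hz.2
    set C : ∀ i, Set (X i) :=
      fun i => ⋂ (j : {j // i ≤ j ∧ i₀ ≤ j}), φ i j.1 j.2.1 '' D j.1 j.2.2 with hC
    have hCcl : ∀ i, IsClosed (C i) :=
      fun i => isClosed_iInter fun j => hclosed i j.1 j.2.1 _ (hDcl j.1 j.2.2)
    have hCdir : ∀ i, Directed (· ⊇ ·)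
        fun j : {j // i ≤ j ∧ i₀ ≤ j} => φ i j.1 j.2.1 '' D j.1 j.2.2 := by
      intro i j k
      obtain ⟨m, hjm, hkm⟩ := directed_of (· ≤ ·) j.1 k.1
      refine ⟨⟨m, j.2.1.trans hjm, j.2.2.trans hjm⟩, ?_, ?_⟩ <;>
      · rintro _ ⟨z, hz, rfl⟩
        first
        | exact ⟨φ j.1 m hjm z, hDdesc j.1 m j.2.2 (j.2.2.trans hjm) hjm z hz,
            hφ_comp i j.1 m j.2.1 hjm z⟩
        | exact ⟨φ k.1 m hkm z, hDdesc k.1 m k.2.2 (j.2.2.trans hjm) hkm z hz,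
            hφ_comp i k.1 m k.2.1 hkm z⟩
    have hCne : ∀ i, (C i).Nonempty := by
      intro i
      obtain ⟨m, him', hi₀m⟩ := directed_of (· ≤ ·) i i₀
      haveI : Nonempty {j // i ≤ j ∧ i₀ ≤ j} := ⟨⟨m, him', hi₀m⟩⟩
      exact IsCompact.nonempty_iInter_of_directed_nonempty_isCompact_isClosed _
        (hCdir i) (fun j => (hDne j.1 j.2.2).image _)
        (fun j => (hclosed i j.1 j.2.1 _ (hDcl j.1 j.2.2)).isCompact)
        (fun j => hclosed i j.1 j.2.1 _ (hDcl j.1 j.2.2))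
    have hCdesc : ∀ i j (h : i ≤ j), ∀ y ∈ C j, φ i j h y ∈ C i := by
      intro i j h y hy
      rw [Set.mem_iInter] at hy ⊢
      intro k
      obtain ⟨m, hjm, hkm⟩ := directed_of (· ≤ ·) j k.1
      obtain ⟨z, hz, rfl⟩ := hy ⟨m, hjm, k.2.2.trans hkm⟩
      refine ⟨φ k.1 m hkm z, hDdesc k.1 m k.2.2 (k.2.2.trans hkm) hkm z hz, ?_⟩
      rw [hφ_comp i k.1 m k.2.1 hkm z, hφ_comp i j m h hjm z]
    have hCA : ∀ i, C i ⊆ A i := by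
      intro i
      obtain ⟨m, him', hi₀m⟩ := directed_of (· ≤ ·) i i₀
      refine (Set.iInter_subset _ ⟨m, him', hi₀m⟩).trans ?_
      rintro _ ⟨z, hz, rfl⟩
      exact hMd i m him' z hz.1
    have hCeq := hmin C hCcl hCne hCdesc hCA
    have hsub : A i₀ ⊆ {x} := by
      rw [← hCeq i₀]
      refine (Set.iInter_subset _ ⟨i₀, le_rfl, le_rfl⟩).trans ?_
      rintro _ ⟨z, hz, rfl⟩
      have hz2 : φ i₀ i₀ le_rfl z = x := hz.2
      exact hz2
    exact Set.Subset.antisymm hsub (Set.singleton_subset_iff.mpr hx)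
  -- conclude
  refine ⟨fun i => (hMn i).some, fun i j h => ?_⟩
  have h1 : φ i j h ((hMn j).some) ∈ A i := hMd i j h _ (hMn j).some_mem
  have h2 : A i = {(hMn i).some} := hsing i _ (hMn i).some_mem
  rw [h2] at h1
  exact h1
end

section
/- Let k be a field, A a commutative Hopf algebra over k, and B a commutative A-comodule algebra with coaction ρ : B → B ⊗_k A. Then for every finite subset F of B there exist a finitely generated k-subalgebra B' of B with F ⊆ B' and a Hopf subalgebra A' of A that is finitely generated as a k-algebra, such that ρ(B') ⊆ B' ⊗_k A'. -/
/-!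
Expanding `ρ b` along a basis of `A`, coassociativity shows that `b` and the coefficients of `ρ b`
span a subcomodule; hence `F` lies in a finite-dimensional subcomodule `V`. Expanding `ρ v`
(`v ∈ V`) along a basis of `B` instead, the coefficients span a finite-dimensional `C ⊆ A` with
`ρ V ⊆ V ⊗ C`, and coassociativity gives both `Δ C ⊆ C ⊗ A` and `Δ C ⊆ A ⊗ C`; over a field
these intersect to `C ⊗ C`. As `A` is commutative, `S` is an involutive algebra map and reverses
`Δ`, so `C + S C` generates a finitely generated Hopf subalgebra `A'`, and `B'` is generated
by `V`.
-/

open TensorProduct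

namespace TensorProduct

section Semiring

variable {R M N P Q M' N' P' Q' : Type*} [CommSemiring R]
  [AddCommMonoid M] [Module R M] [AddCommMonoid N] [Module R N]
  [AddCommMonoid P] [Module R P] [AddCommMonoid Q] [Module R Q]
  [AddCommMonoid M'] [Module R M'] [AddCommMonoid N'] [Module R N']
  [AddCommMonoid P'] [Module R P'] [AddCommMonoid Q'] [Module R Q']

theorem map_mem_range_map {a : M' →ₗ[R] M} {c : N' →ₗ[R] N} {b : P' →ₗ[R] P}
    {d : Q' →ₗ[R] Q} {f : M →ₗ[R] P} {g : N →ₗ[R] Q} {t : M ⊗[R] N}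
    (ht : t ∈ LinearMap.range (map a c)) (hf : LinearMap.range (f ∘ₗ a) ≤ LinearMap.range b)
    (hg : LinearMap.range (g ∘ₗ c) ≤ LinearMap.range d) :
    map f g t ∈ LinearMap.range (map b d) := by
  obtain ⟨s, rfl⟩ := ht
  rw [map_map]
  exact range_map_mono hf hg ⟨s, rfl⟩

variable {J : Type*} [DecidableEq J] (β : Module.Basis J R N)

theorem equivFinsuppOfBasisRight_rTensor (f : M →ₗ[R] P) (t : M ⊗[R] N) (j : J) :
    equivFinsuppOfBasisRight β (f.rTensor N t) j = f (equivFinsuppOfBasisRight β t j) := by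
  induction t <;> simp_all

theorem equivFinsuppOfBasisRight_assoc_symm (u : M ⊗[R] (P ⊗[R] N)) (j : J) :
    equivFinsuppOfBasisRight β ((TensorProduct.assoc R M P N).symm u) j =
      ((Finsupp.lapply j ∘ₗ (equivFinsuppOfBasisRight β).toLinearMap).lTensor M) u := by
  induction u with
  | zero => simp
  | add x y hx hy => simp_all
  | tmul m v =>
    induction v with
    | zero => simp
    | add x y hx hy => simp_all [tmul_add]
    | tmul p n => simp [smul_tmul']

theorem mem_range_rTensor_subtype_iff {V : Submodule R M} {t : M ⊗[R] N} :
    t ∈ LinearMap.range (V.subtype.rTensor N) ↔ ∀ j, equivFinsuppOfBasisRight β t j ∈ V := by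
  refine ⟨?_, fun h ↦ ?_⟩
  · rintro ⟨s, rfl⟩ j
    rw [equivFinsuppOfBasisRight_rTensor]
    exact Subtype.prop _
  · rw [← (equivFinsuppOfBasisRight β).symm_apply_apply t, equivFinsuppOfBasisRight_symm_apply]
    exact Submodule.finsuppSum_mem _ _ _ _ fun j _ ↦ ⟨⟨_, h j⟩ ⊗ₜ β j, rfl⟩

variable {I : Type*} [DecidableEq I] (α : Module.Basis I R M)

theorem equivFinsuppOfBasisLeft_lTensor (g : N →ₗ[R] P) (t : M ⊗[R] N) (i : I) :
    equivFinsuppOfBasisLeft α (g.lTensor M t) i = g (equivFinsuppOfBasisLeft α t i) := by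
  induction t <;> simp_all

theorem equivFinsuppOfBasisLeft_assoc (u : (M ⊗[R] N) ⊗[R] P) (i : I) :
    equivFinsuppOfBasisLeft α (TensorProduct.assoc R M N P u) i =
      ((Finsupp.lapply i ∘ₗ (equivFinsuppOfBasisLeft α).toLinearMap).rTensor P) u := by
  induction u with
  | zero => simp
  | add x y hx hy => simp_all
  | tmul v p =>
    induction v with
    | zero => simp
    | add x y hx hy => simp_all [add_tmul]
    | tmul m n => simp [smul_tmul']

theorem mem_range_lTensor_subtype_iff {W : Submodule R N} {t : M ⊗[R] N} :
    t ∈ LinearMap.range (W.subtype.lTensor M) ↔ ∀ i, equivFinsuppOfBasisLeft α t i ∈ W := by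
  refine ⟨?_, fun h ↦ ?_⟩
  · rintro ⟨s, rfl⟩ i
    rw [equivFinsuppOfBasisLeft_lTensor]
    exact Subtype.prop _
  · rw [← (equivFinsuppOfBasisLeft α).symm_apply_apply t, equivFinsuppOfBasisLeft_symm_apply]
    exact Submodule.finsuppSum_mem _ _ _ _ fun i _ ↦ ⟨α i ⊗ₜ ⟨_, h i⟩, rfl⟩

end Semiring

variable {k M N : Type*} [Field k] [AddCommGroup M] [Module k M] [AddCommGroup N] [Module k N]

theorem range_rTensor_inf_range_lTensor (V : Submodule k M) (W : Submodule k N) :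
    LinearMap.range (V.subtype.rTensor N) ⊓ LinearMap.range (W.subtype.lTensor M) =
      LinearMap.range (mapIncl V W) := by
  refine le_antisymm ?_ (le_inf (range_map_mono le_rfl (by simp)) (range_map_mono (by simp) le_rfl))
  rintro t ⟨⟨s, rfl⟩, u, hu⟩
  obtain ⟨π, hπ⟩ := V.subtype.exists_leftInverse_of_injective V.ker_subtype
  refine ⟨π.rTensor W u, ?_⟩
  calc mapIncl V W (π.rTensor W u) = ((V.subtype ∘ₗ π).rTensor N) (W.subtype.lTensor M u) := by
        rw [← LinearMap.comp_apply, ← LinearMap.comp_apply]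
        congr 1
        ext
        rfl
    _ = V.subtype.rTensor N s := by
        rw [hu, ← LinearMap.rTensor_comp_apply, LinearMap.comp_assoc, hπ, LinearMap.comp_id]

end TensorProduct

section Comodule

open Coalgebra

variable {R A M : Type*} [CommSemiring R] [AddCommMonoid A] [Module R A] [AddCommMonoid M]
  [Module R M]

def IsSubcomodule (ρ : M →ₗ[R] M ⊗[R] A) (V : Submodule R M) : Prop :=
  ∀ v ∈ V, ρ v ∈ LinearMap.range (V.subtype.rTensor A)

theorem isSubcomodule_span {ρ : M →ₗ[R] M ⊗[R] A} {s : Set M}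
    (h : ∀ y ∈ s, ρ y ∈ LinearMap.range ((Submodule.span R s).subtype.rTensor A)) :
    IsSubcomodule ρ (Submodule.span R s) :=
  fun _ hv ↦ (Submodule.span_le (p := (LinearMap.range _).comap ρ)).2 h hv

variable [Coalgebra R A]

def IsCoassocCoaction (ρ : M →ₗ[R] M ⊗[R] A) : Prop :=
  ∀ m, TensorProduct.assoc R M A A (ρ.rTensor A (ρ m)) = (comul (R := R) (A := A)).lTensor M (ρ m)

variable {ρ : M →ₗ[R] M ⊗[R] A}

theorem IsCoassocCoaction.apply_equivFinsuppOfBasisRight (hρ : IsCoassocCoaction ρ)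
    {J : Type*} [DecidableEq J] (β : Module.Basis J R A) (x : M) (j : J) :
    ρ (equivFinsuppOfBasisRight β (ρ x) j) =
      ((Finsupp.lapply j ∘ₗ (equivFinsuppOfBasisRight β).toLinearMap ∘ₗ comul).lTensor M)
        (ρ x) := by
  rw [← equivFinsuppOfBasisRight_rTensor, ← (TensorProduct.assoc R M A A).symm_apply_apply
    (ρ.rTensor A (ρ x)), hρ x, equivFinsuppOfBasisRight_assoc_symm, ← LinearMap.lTensor_comp_apply]
  rfl

theorem IsCoassocCoaction.comul_equivFinsuppOfBasisLeft (hρ : IsCoassocCoaction ρ)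
    {I : Type*} [DecidableEq I] (α : Module.Basis I R M) (x : M) (i : I) :
    comul (R := R) (equivFinsuppOfBasisLeft α (ρ x) i) =
      ((Finsupp.lapply i ∘ₗ (equivFinsuppOfBasisLeft α).toLinearMap ∘ₗ ρ).rTensor A) (ρ x) := by
  rw [← equivFinsuppOfBasisLeft_lTensor, ← hρ x, equivFinsuppOfBasisLeft_assoc,
    ← LinearMap.rTensor_comp_apply]
  rfl

theorem IsCoassocCoaction.isSubcomodule_span_insert (hρ : IsCoassocCoaction ρ)
    {J : Type*} [DecidableEq J] (β : Module.Basis J R A) (x : M) :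
    IsSubcomodule ρ
      (Submodule.span R (insert x (Set.range (equivFinsuppOfBasisRight β (ρ x))))) := by
  set U := Submodule.span R (insert x (Set.range (equivFinsuppOfBasisRight β (ρ x))))
  have hx : ρ x ∈ LinearMap.range (U.subtype.rTensor A) :=
    (mem_range_rTensor_subtype_iff β).2 fun j ↦
      Submodule.subset_span (Set.mem_insert_of_mem _ ⟨j, rfl⟩)
  refine isSubcomodule_span ?_
  rintro _ (rfl | ⟨j, rfl⟩)
  · exact hx
  · rw [hρ.apply_equivFinsuppOfBasisRight]
    exact map_mem_range_map hx (by simp [U]) (by simp)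

end Comodule

section FiniteComodule

open Coalgebra

variable {k A M : Type*} [Field k] [AddCommGroup A] [Module k A] [Coalgebra k A]
  [AddCommGroup M] [Module k M] {ρ : M →ₗ[k] M ⊗[k] A}


theorem IsCoassocCoaction.exists_fg_isSubcomodule (hρ : IsCoassocCoaction ρ) (F : Finset M) :
    ∃ V : Submodule k M, V.FG ∧ (F : Set M) ⊆ V ∧ IsSubcomodule ρ V := by
  classical
  let β := Module.Basis.ofVectorSpace k A
  let gens : M → Set M := fun x ↦ insert x (Set.range (equivFinsuppOfBasisRight β (ρ x)))
  refine ⟨Submodule.span k (⋃ x ∈ F, gens x), Submodule.fg_span ?_,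
    fun x hx ↦ Submodule.subset_span (Set.mem_biUnion hx (Set.mem_insert x _)), ?_⟩
  · exact F.finite_toSet.biUnion fun x _ ↦ (Finsupp.finite_range _).insert x
  refine isSubcomodule_span fun y hy ↦ ?_
  obtain ⟨x, hx, hy⟩ := Set.mem_iUnion₂.1 hy
  have hUV : Submodule.span k (gens x) ≤ Submodule.span k (⋃ x ∈ F, gens x) :=
    Submodule.span_mono (Set.subset_biUnion_of_mem hx)
  exact range_map_mono (by simpa using hUV) le_rfl
    (hρ.isSubcomodule_span_insert β x y (Submodule.subset_span hy))

theorem IsSubcomodule.exists_fg_subcoalgebra (hρ : IsCoassocCoaction ρ) {V : Submodule k M}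
    (hV : IsSubcomodule ρ V) (hVfg : V.FG) :
    ∃ C : Submodule k A, C.FG ∧ (∀ c ∈ C, comul (R := k) c ∈ LinearMap.range (mapIncl C C)) ∧
      ∀ v ∈ V, ρ v ∈ LinearMap.range (mapIncl V C) := by
  classical
  let α := Module.Basis.ofVectorSpace k M
  obtain ⟨S, rfl⟩ := hVfg
  let C := Submodule.span k (⋃ s ∈ S, Set.range (equivFinsuppOfBasisLeft α (ρ s)))
  have hcoeff : ∀ v ∈ Submodule.span k (S : Set M), ∀ i, equivFinsuppOfBasisLeft α (ρ v) i ∈ C := by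
    intro v hv i
    refine (Submodule.span_le (p := C.comap
      (Finsupp.lapply i ∘ₗ (equivFinsuppOfBasisLeft α).toLinearMap ∘ₗ ρ))).2 ?_ hv
    exact fun s hs ↦ Submodule.subset_span (Set.mem_biUnion hs ⟨i, rfl⟩)
  have hleft : ∀ v ∈ Submodule.span k (S : Set M), ρ v ∈ LinearMap.range (C.subtype.lTensor M) :=
    fun v hv ↦ (mem_range_lTensor_subtype_iff α).2 (hcoeff v hv)
  refine ⟨C, Submodule.fg_span (S.finite_toSet.biUnion fun s _ ↦ Finsupp.finite_range _), ?_,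
    fun v hv ↦ range_rTensor_inf_range_lTensor (Submodule.span k (S : Set M)) C ▸
      ⟨hV v hv, hleft v hv⟩⟩
  intro c hc
  refine (Submodule.span_le (p := (LinearMap.range (mapIncl C C)).comap comul)).2 ?_ hc
  intro _ hc
  obtain ⟨s, hs, i, rfl⟩ := Set.mem_iUnion₂.1 hc
  have hsV : s ∈ Submodule.span k (S : Set M) := Submodule.subset_span hs
  rw [SetLike.mem_coe, Submodule.mem_comap, hρ.comul_equivFinsuppOfBasisLeft,
    ← range_rTensor_inf_range_lTensor]
  refine ⟨map_mem_range_map (hV s hsV) ?_ (by simp),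
    map_mem_range_map (hleft s hsV) (by simp) (by simp)⟩
  rintro _ ⟨⟨v, hv⟩, rfl⟩
  simpa using hcoeff v hv i

end FiniteComodule

theorem AlgHom.mem_range_map_val_of_mem_adjoin {R S T U : Type*} [CommSemiring R] [Semiring S]
    [Algebra R S] [Semiring T] [Algebra R T] [Semiring U] [Algebra R U] (φ : S →ₐ[R] T ⊗[R] U)
    {T' : Subalgebra R T} {U' : Subalgebra R U} {s : Set S}
    (hs : ∀ x ∈ s, φ x ∈ LinearMap.range (map T'.val.toLinearMap U'.val.toLinearMap))
    {x : S} (hx : x ∈ Algebra.adjoin R s) :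
    φ x ∈ LinearMap.range (map T'.val.toLinearMap U'.val.toLinearMap) := by
  have hrange : LinearMap.range (map T'.val.toLinearMap U'.val.toLinearMap) =
      Subalgebra.toSubmodule (Algebra.TensorProduct.map T'.val U'.val).range := by
    ext; exact Iff.rfl
  rw [hrange] at hs ⊢
  exact Algebra.adjoin_le (S := (Algebra.TensorProduct.map T'.val U'.val).range.comap φ) hs hx

theorem Submodule.range_subtype_le_range_val {R S : Type*} [CommSemiring R] [Semiring S]
    [Algebra R S] {V : Submodule R S} {T : Subalgebra R S} (h : V ≤ Subalgebra.toSubmodule T) :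
    LinearMap.range V.subtype ≤ LinearMap.range T.val.toLinearMap := by
  rintro _ ⟨v, rfl⟩
  exact ⟨⟨v, h v.2⟩, rfl⟩

theorem Submodule.FG.fg_adjoin {R S : Type*} [CommSemiring R] [Semiring S] [Algebra R S]
    {V : Submodule R S} (hV : V.FG) : (Algebra.adjoin R (V : Set S)).FG := by
  obtain ⟨s, hs, rfl⟩ := Submodule.fg_def.1 hV
  rw [Algebra.adjoin_span]
  exact Subalgebra.fg_def.2 ⟨s, hs, rfl⟩

namespace HopfAlgebra

open Coalgebra WithConv

variable {k A : Type*} [CommSemiring k] [CommSemiring A] [HopfAlgebra k A]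

-- In the convolution group of algebra maps `A → C`, `f⁻¹ = f ∘ S`.
theorem antipode_antipode (a : A) : antipode k (antipode k a) = a :=
  congr(ofConv $(inv_inv (toConv (AlgHom.id k A))) a)

theorem comul_antipode (a : A) :
    comul (R := k) (antipode k a) =
      TensorProduct.comm k A A (map (antipode k) (antipode k) (comul (R := k) a)) := by
  -- `Δ = ι₁ * ι₂` for the two inclusions `A → A ⊗ A`, so `Δ ∘ S = Δ⁻¹ = ι₂⁻¹ * ι₁⁻¹`.
  let ι₁ : WithConv (A →ₐ[k] A ⊗[k] A) := toConv Algebra.TensorProduct.includeLeft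
  let ι₂ : WithConv (A →ₐ[k] A ⊗[k] A) := toConv Algebra.TensorProduct.includeRight
  have hsplit : toConv (Bialgebra.comulAlgHom k A) = ι₁ * ι₂ := by
    ext a
    simp [AlgHom.convMul_apply, ι₁, ι₂]
  have hinv : (toConv (Bialgebra.comulAlgHom k A))⁻¹ = ι₂⁻¹ * ι₁⁻¹ := by
    rw [hsplit]
    exact mul_inv_rev ι₁ ι₂
  refine congr(ofConv $hinv a).trans ?_
  rw [AlgHom.convMul_apply]
  induction comul (R := k) a with
  | zero => simp
  | add x y hx hy => simp only [map_add, hx, hy]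
  | tmul x y =>
    show (1 ⊗ₜ[k] antipode k x) * (antipode k y ⊗ₜ[k] 1) = _
    simp

def adjoinAntipode (C : Submodule k A) : Subalgebra k A :=
  Algebra.adjoin k ↑(C ⊔ C.map (antipode k))

theorem le_adjoinAntipode (C : Submodule k A) :
    C ≤ Subalgebra.toSubmodule (adjoinAntipode C) :=
  le_sup_left.trans Algebra.subset_adjoin

theorem fg_adjoinAntipode {C : Submodule k A} (hC : C.FG) : (adjoinAntipode C).FG :=
  (hC.sup (hC.map _)).fg_adjoin

theorem antipode_mem_adjoinAntipode (C : Submodule k A) {a : A} (ha : a ∈ adjoinAntipode C) :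
    antipode k a ∈ adjoinAntipode C := by
  have hgen : C ⊔ C.map (antipode k) ≤ Subalgebra.toSubmodule (adjoinAntipode C) :=
    fun _ hx ↦ Algebra.subset_adjoin hx
  have hstable : C ⊔ C.map (antipode k) ≤
      (Subalgebra.toSubmodule (adjoinAntipode C)).comap (antipode k) := by
    refine sup_le (fun c hc ↦ hgen (Submodule.mem_sup_right ⟨c, hc, rfl⟩)) ?_
    rintro _ ⟨c, hc, rfl⟩
    simpa [antipode_antipode] using hgen (Submodule.mem_sup_left hc)
  exact Algebra.adjoin_le (S := (adjoinAntipode C).comap (antipodeAlgHom k A))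
    (fun _ hx ↦ hstable hx) ha

theorem comul_mem_adjoinAntipode {C : Submodule k A}
    (hC : ∀ c ∈ C, comul (R := k) c ∈ LinearMap.range (mapIncl C C)) {a : A}
    (ha : a ∈ adjoinAntipode C) :
    comul (R := k) a ∈ LinearMap.range
      (map (adjoinAntipode C).val.toLinearMap (adjoinAntipode C).val.toLinearMap) := by
  set A' := adjoinAntipode C
  have hCA' := Submodule.range_subtype_le_range_val (le_adjoinAntipode C)
  have hSCA' : LinearMap.range (antipode k ∘ₗ C.subtype) ≤ LinearMap.range A'.val.toLinearMap := by
    rintro _ ⟨c, rfl⟩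
    exact ⟨⟨_, antipode_mem_adjoinAntipode C (le_adjoinAntipode C c.2)⟩, rfl⟩
  have hgen : C ⊔ C.map (antipode k) ≤ (LinearMap.range (map A'.val.toLinearMap
      A'.val.toLinearMap)).comap (comul (R := k)) := by
    refine sup_le (fun c hc ↦ range_map_mono hCA' hCA' (hC c hc)) ?_
    rintro _ ⟨c, hc, rfl⟩
    obtain ⟨t, ht⟩ := map_mem_range_map (hC c hc) hSCA' hSCA'
    exact ⟨TensorProduct.comm k A' A' t, by rw [comul_antipode, ← ht, map_comm]⟩
  exact (Bialgebra.comulAlgHom k A).mem_range_map_val_of_mem_adjoin (fun _ hx ↦ hgen hx) ha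

end HopfAlgebra

theorem exists_fg_subComoduleAlgebra_general
    (k : Type) [Field k]
    (A : Type) [CommRing A] [HopfAlgebra k A]
    (B : Type) [CommRing B] [Algebra k B]
    (ρ : B →ₐ[k] B ⊗[k] A)
    (hcoassoc : ∀ b : B,
      (TensorProduct.assoc k B A A)
          ((TensorProduct.map ρ.toLinearMap (LinearMap.id : A →ₗ[k] A)) (ρ b)) =
        (TensorProduct.map (LinearMap.id : B →ₗ[k] B) (Coalgebra.comul (R := k) (A := A)))
          (ρ b))
    (F : Finset B) :
    ∃ B' : Subalgebra k B, B'.FG ∧ (F : Set B) ⊆ (B' : Set B) ∧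
      ∃ A' : Subalgebra k A, A'.FG ∧
        -- `A'` is a Hopf subalgebra: `Δ(A') ⊆ A' ⊗ A'` ...
        (∀ a ∈ A', Coalgebra.comul (R := k) a ∈
          LinearMap.range (TensorProduct.map A'.val.toLinearMap A'.val.toLinearMap)) ∧
        -- ... and `S(A') ⊆ A'`
        (∀ a ∈ A', HopfAlgebra.antipode (R := k) a ∈ A') ∧
        -- the coaction restricts: `ρ(B') ⊆ B' ⊗ A'`
        (∀ b ∈ B', ρ b ∈
          LinearMap.range (TensorProduct.map B'.val.toLinearMap A'.val.toLinearMap)) := by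
  have hρ : IsCoassocCoaction ρ.toLinearMap := hcoassoc
  obtain ⟨V, hVfg, hFV, hV⟩ := hρ.exists_fg_isSubcomodule F
  obtain ⟨C, hCfg, hC, hρVC⟩ := hV.exists_fg_subcoalgebra hρ hVfg
  let B' := Algebra.adjoin k (V : Set B)
  let A' := HopfAlgebra.adjoinAntipode C
  have hVB' : LinearMap.range V.subtype ≤ LinearMap.range B'.val.toLinearMap :=
    Submodule.range_subtype_le_range_val fun _ hv ↦ Algebra.subset_adjoin hv
  have hCA' := Submodule.range_subtype_le_range_val (HopfAlgebra.le_adjoinAntipode C)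
  refine ⟨B', hVfg.fg_adjoin, hFV.trans Algebra.subset_adjoin, A',
    HopfAlgebra.fg_adjoinAntipode hCfg, fun _ ↦ HopfAlgebra.comul_mem_adjoinAntipode hC,
    fun _ ↦ HopfAlgebra.antipode_mem_adjoinAntipode C,
    fun _ ↦ ρ.mem_range_map_val_of_mem_adjoin fun v hv ↦ range_map_mono hVB' hCA' (hρVC v hv)⟩

/-- Let `A` be a commutative Hopf algebra over a field `k` and let `B` be a commutative
`A`-comodule algebra with coaction `ρ : B → B ⊗[k] A`.  Then every finite subset `F` of `B`
is contained in a finitely generated `k`-subalgebra `B'` of `B` for which there is a Hopf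
subalgebra `A'` of `A`, finitely generated as a `k`-algebra, with `ρ(B') ⊆ B' ⊗[k] A'`. -/
theorem exists_fg_subComoduleAlgebra
    (k : Type) [Field k]
    (A : Type) [CommRing A] [HopfAlgebra k A]
    (B : Type) [CommRing B] [Algebra k B]
    (ρ : B →ₐ[k] B ⊗[k] A)
    (hcoassoc : ∀ b : B,
      (TensorProduct.assoc k B A A)
          ((TensorProduct.map ρ.toLinearMap (LinearMap.id : A →ₗ[k] A)) (ρ b)) =
        (TensorProduct.map (LinearMap.id : B →ₗ[k] B) (Coalgebra.comul (R := k) (A := A)))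
          (ρ b))
    (hcounit : ∀ b : B,
      (TensorProduct.rid k B)
          ((TensorProduct.map (LinearMap.id : B →ₗ[k] B) (Coalgebra.counit (R := k) (A := A)))
            (ρ b)) = b)
    (F : Finset B) :
    ∃ B' : Subalgebra k B, B'.FG ∧ (F : Set B) ⊆ (B' : Set B) ∧
      ∃ A' : Subalgebra k A, A'.FG ∧
        -- `A'` is a Hopf subalgebra: `Δ(A') ⊆ A' ⊗ A'` ...
        (∀ a ∈ A', Coalgebra.comul (R := k) a ∈
          LinearMap.range (TensorProduct.map A'.val.toLinearMap A'.val.toLinearMap)) ∧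
        -- ... and `S(A') ⊆ A'`
        (∀ a ∈ A', HopfAlgebra.antipode (R := k) a ∈ A') ∧
        -- the coaction restricts: `ρ(B') ⊆ B' ⊗ A'`
        (∀ b ∈ B', ρ b ∈
          LinearMap.range (TensorProduct.map B'.val.toLinearMap A'.val.toLinearMap)) :=
  exists_fg_subComoduleAlgebra_general k A B ρ hcoassoc F
end

section
/- Let k ⊆ K be a field extension and let B be a commutative k-algebra. If B ⊗_k K is a finitely generated K-algebra, then B is a finitely generated k-algebra. -/
open TensorProduct

attribute [local instance] Algebra.TensorProduct.rightAlgebra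

/-- If `k ⊆ K` is a field extension and `B` is a commutative `k`-algebra such that
`B ⊗[k] K` is a finitely generated `K`-algebra, then `B` is a finitely generated
`k`-algebra. -/
theorem finiteType_of_finiteType_baseChange
    (k K : Type) [Field k] [Field K] [Algebra k K]
    (B : Type) [CommRing B] [Algebra k B]
    (h : Algebra.FiniteType K (B ⊗[k] K)) :
    Algebra.FiniteType k B :=
  have : Algebra.FiniteType K (K ⊗[k] B) := h.equiv (Algebra.TensorProduct.commRight k K B).symm
  -- `K` is faithfully flat over `k`, being a nonzero free module over a field.
  .of_finiteType_tensorProduct_of_faithfullyFlat K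
end

section
/- Let k be a field, let A be a commutative Hopf algebra over k that is finitely generated as a k-algebra, and let B be a nonzero commutative A-comodule algebra whose Galois map B ⊗_k B → B ⊗_k A, b ⊗ b' ↦ (b ⊗ 1)·ρ(b'), is bijective. Then B is a finitely generated k-algebra. (Geometrically: a torsor under an affine group scheme of finite type over k is itself an affine scheme of finite type over k.) -/
open TensorProduct

/-- The Galois map `B ⊗[k] B →ₗ[k] B ⊗[k] A`, `b ⊗ b' ↦ (b ⊗ 1) * ρ(b')`, of a
comodule algebra `B` with coaction `ρ : B → B ⊗[k] A`. -/
noncomputable def galoisMap (k B A : Type) [CommRing k] [CommRing B] [CommRing A]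
    [Algebra k B] [Algebra k A] (ρ : B →ₐ[k] B ⊗[k] A) : B ⊗[k] B →ₗ[k] B ⊗[k] A :=
  (LinearMap.mul' k (B ⊗[k] A)).comp
    (TensorProduct.map (Algebra.TensorProduct.includeLeft : B →ₐ[k] B ⊗[k] A).toLinearMap
      ρ.toLinearMap)

set_option maxHeartbeats 1000000 in
set_option synthInstance.maxHeartbeats 200000 in
/-- Descent of finite type along the faithfully flat `k → B` for a field `k`. -/
theorem descent_finiteType (k : Type) [Field k] (B : Type) [CommRing B] [Algebra k B]
    [Nontrivial B] (h : Algebra.FiniteType B (B ⊗[k] B)) : Algebra.FiniteType k B := by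
  classical
  obtain ⟨s, hs⟩ := h.out
  -- decompose each generator into finitely many pure tensors
  have hdec := fun x : B ⊗[k] B => TensorProduct.exists_finset x
  set f : B ⊗[k] B → Finset (B × B) := fun x => (hdec x).choose with hf
  have hfx : ∀ x : B ⊗[k] B, x = (f x).sum fun p => p.1 ⊗ₜ[k] p.2 :=
    fun x => (hdec x).choose_spec
  set T : Finset B := s.biUnion (fun x => (f x).image Prod.snd) with hT
  set C : Subalgebra k B := Algebra.adjoin k (T : Set B) with hC
  -- a splitting of the unit k → B
  obtain ⟨φ, hφ⟩ := (Algebra.linearMap k B).exists_leftInverse_of_injective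
    (LinearMap.ker_eq_bot.mpr (algebraMap k B).injective)
  have hφ1 : φ 1 = 1 := by
    have := congrArg (fun g : k →ₗ[k] k => g 1) hφ
    simpa using this
  set ψ : B ⊗[k] B →ₗ[k] B :=
    (TensorProduct.lid k B).toLinearMap ∘ₗ TensorProduct.map φ LinearMap.id with hψ
  have hψt : ∀ (c d : B), ψ (c ⊗ₜ[k] d) = φ c • d := by intro c d; simp [hψ]
  -- the image of B ⊗ C in B ⊗ B
  set E : Subalgebra k (B ⊗[k] B) := (Algebra.TensorProduct.map (AlgHom.id k B) C.val).range
    with hE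
  have hbone : ∀ b : B, b ⊗ₜ[k] (1 : B) ∈ E := by
    intro b
    exact ⟨b ⊗ₜ[k] (1 : C), by simp⟩
  set E' : Subalgebra B (B ⊗[k] B) :=
    { toSubsemiring := E.toSubsemiring
      algebraMap_mem' := fun b => by
        have h1 : algebraMap B (B ⊗[k] B) b = (algebraMap B B b) ⊗ₜ[k] (1 : B) :=
          Algebra.TensorProduct.algebraMap_apply b
        rw [h1, Algebra.algebraMap_self_apply]; exact hbone b } with hE'
  have hsE : (s : Set (B ⊗[k] B)) ⊆ E' := by
    intro x hx
    have : x = (f x).sum fun p => p.1 ⊗ₜ[k] p.2 := hfx x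
    rw [this]
    apply Subalgebra.sum_mem
    intro p hp
    have hp2 : p.2 ∈ C := by
      apply Algebra.subset_adjoin
      have : p.2 ∈ T := Finset.mem_biUnion.mpr ⟨x, hx, Finset.mem_image.mpr ⟨p, hp, rfl⟩⟩
      exact this
    show p.1 ⊗ₜ[k] p.2 ∈ E
    exact ⟨p.1 ⊗ₜ[k] (⟨p.2, hp2⟩ : C), by simp⟩
  have hEtop : ∀ z : B ⊗[k] B, z ∈ E := by
    intro z
    have : Algebra.adjoin B (s : Set (B ⊗[k] B)) ≤ E' := Algebra.adjoin_le hsE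
    have hz : z ∈ E' := this (hs ▸ Algebra.mem_top)
    exact hz
  -- now conclude each b ∈ C
  have key : ∀ b : B, b ∈ C := by
    intro b
    obtain ⟨y, hy⟩ := hEtop ((1 : B) ⊗ₜ[k] b)
    have hyC : ∀ y : B ⊗[k] C, ψ ((Algebra.TensorProduct.map (AlgHom.id k B) C.val) y) ∈ C := by
      intro y
      induction y using TensorProduct.induction_on with
      | zero => rw [map_zero, map_zero]; exact C.zero_mem
      | tmul c z =>
          rw [Algebra.TensorProduct.map_tmul]
          rw [show (AlgHom.id k B) c = c from rfl]
          rw [hψt]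
          exact C.smul_mem z.2 _
      | add u v hu hv => rw [map_add, map_add]; exact C.add_mem hu hv
    have hmem := hyC y
    rw [show (Algebra.TensorProduct.map (AlgHom.id k B) C.val) y = (1 : B) ⊗ₜ[k] b from hy,
      hψt, hφ1, one_smul] at hmem
    exact hmem
  exact ⟨⟨T, le_antisymm le_top (fun b _ => key b)⟩⟩

/-- The Galois map as a `B`-algebra homomorphism. -/
noncomputable def galoisAlgHom (k B A : Type) [CommRing k] [CommRing B] [CommRing A]
    [Algebra k B] [Algebra k A] (ρ : B →ₐ[k] B ⊗[k] A) : (B ⊗[k] B) →ₐ[B] B ⊗[k] A :=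
  Algebra.TensorProduct.lift
    (Algebra.TensorProduct.includeLeft : B →ₐ[B] B ⊗[k] A) ρ (fun _ _ => Commute.all _ _)

theorem galoisAlgHom_apply (k B A : Type) [CommRing k] [CommRing B] [CommRing A]
    [Algebra k B] [Algebra k A] (ρ : B →ₐ[k] B ⊗[k] A) (x : B ⊗[k] B) :
    galoisAlgHom k B A ρ x = galoisMap k B A ρ x := by
  induction x using TensorProduct.induction_on with
  | zero => simp [galoisMap]
  | tmul b b' =>
      simp [galoisAlgHom, galoisMap, Algebra.TensorProduct.lift_tmul, LinearMap.mul'_apply]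
  | add u v hu hv => rw [map_add, map_add, hu, hv]

/-- A torsor under an affine group scheme of finite type over a field is itself of finite
type: if `A` is a commutative Hopf algebra over `k` that is finitely generated as a
`k`-algebra and `B` is a nonzero commutative `A`-comodule algebra whose Galois map is
bijective (i.e. `Spec B` is a torsor under `Spec A`), then `B` is a finitely generated
`k`-algebra. -/
theorem torsor_finiteType
    (k : Type) [Field k]
    (A : Type) [CommRing A] [HopfAlgebra k A]
    (hA : Algebra.FiniteType k A)
    (B : Type) [CommRing B] [Algebra k B] [Nontrivial B]
    (ρ : B →ₐ[k] B ⊗[k] A)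
    (hcoassoc : ∀ b : B,
      (TensorProduct.assoc k B A A)
          ((TensorProduct.map ρ.toLinearMap (LinearMap.id : A →ₗ[k] A)) (ρ b)) =
        (TensorProduct.map (LinearMap.id : B →ₗ[k] B) (Coalgebra.comul (R := k) (A := A)))
          (ρ b))
    (hcounit : ∀ b : B,
      (TensorProduct.rid k B)
          ((TensorProduct.map (LinearMap.id : B →ₗ[k] B) (Coalgebra.counit (R := k) (A := A)))
            (ρ b)) = b)
    (hgalois : Function.Bijective (galoisMap k B A ρ)) :
    Algebra.FiniteType k B := by
  have hbij : Function.Bijective (galoisAlgHom k B A ρ) := by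
    have he : ⇑(galoisAlgHom k B A ρ) = ⇑(galoisMap k B A ρ) :=
      funext (galoisAlgHom_apply k B A ρ)
    rw [he]; exact hgalois
  haveI := hA
  have hBA : Algebra.FiniteType B (B ⊗[k] A) := inferInstance
  have hBB : Algebra.FiniteType B (B ⊗[k] B) :=
    hBA.equiv (AlgEquiv.ofBijective (galoisAlgHom k B A ρ) hbij).symm
  exact descent_finiteType k B hBB
end
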